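/- Let Λ = Λ(k[h], σ, a) be a generalized Weyl algebra over a field k of characteristic zero with a ≠ 0. If gcd(a, a') = 1, then for every irreducible polynomial p dividing a, the left ideal I(x,p) = Λx + Λp is a projective left Λ-module. -/

import Mathlib

/-! Write `a = p b`. Since `a` is separable, `p` and `b` are coprime, say `u p + v b = 1`.
Right multiplication by `q = v(b)(h)` maps `I = Λx + Λp` into `Λx`, because
`x f(h) = σ(f)(h) x` and `p(h) q = v(h) a(h) = v(h) y x`. As `x` is not a right zero divisor,
`c ↦ (c q x⁻¹, c u(h))` is a well-defined map `I → Λ²` splitting `(d, e) ↦ d x + e p(h)`,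
so `I` is a direct summand of `Λ²`.

That `x` is right regular follows from the normal form `Λ = ⨁ₙ k[h] vₙ` (`vₙ = xⁿ`,
`v₋ₙ = yⁿ`): letting `Λ` act on `ℤ →₀ k[X]` by explicit shift operators shows that the
`vₙ` are free over `k[h]`, and `vₙ x` is a nonzero polynomial multiple of `vₙ₊₁`. -/

open Polynomial

/-- Generators: `ι 0 = y`, `ι 1 = h`, `ι 2 = x`. Defining relations of the
generalized Weyl algebra `Λ(k[h], σ, a)`, where the automorphism `σ` of `k[h]`
is determined by `s = σ(h)` (so `σ(f) = f ∘ s`):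
`xh = σ(h)x`, `hy = yσ(h)`, `yx = a(h)`, `xy = σ(a)(h)`. -/
inductive gwaRelS (k : Type*) [CommRing k] (s a : Polynomial k) :
    FreeAlgebra k (Fin 3) → FreeAlgebra k (Fin 3) → Prop
  | xh : gwaRelS k s a (FreeAlgebra.ι k 2 * FreeAlgebra.ι k 1)
      (Polynomial.aeval (FreeAlgebra.ι k 1) s * FreeAlgebra.ι k 2)
  | hy : gwaRelS k s a (FreeAlgebra.ι k 1 * FreeAlgebra.ι k 0)
      (FreeAlgebra.ι k 0 * Polynomial.aeval (FreeAlgebra.ι k 1) s)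
  | yx : gwaRelS k s a (FreeAlgebra.ι k 0 * FreeAlgebra.ι k 2)
      (Polynomial.aeval (FreeAlgebra.ι k 1) a)
  | xy : gwaRelS k s a (FreeAlgebra.ι k 2 * FreeAlgebra.ι k 0)
      (Polynomial.aeval (FreeAlgebra.ι k 1) (a.comp s))

/-- The generalized Weyl algebra `Λ(k[h], σ, a)` with `σ(h) = s`. -/
abbrev GWAS (k : Type*) [CommRing k] (s a : Polynomial k) :=
  RingQuot (gwaRelS k s a)

/-- `y ∈ Λ`. -/
noncomputable def GWAS.y (k : Type*) [CommRing k] (s a : Polynomial k) :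
    GWAS k s a :=
  RingQuot.mkAlgHom k (gwaRelS k s a) (FreeAlgebra.ι k 0)

/-- `h ∈ Λ`. -/
noncomputable def GWAS.h (k : Type*) [CommRing k] (s a : Polynomial k) :
    GWAS k s a :=
  RingQuot.mkAlgHom k (gwaRelS k s a) (FreeAlgebra.ι k 1)

/-- `x ∈ Λ`. -/
noncomputable def GWAS.x (k : Type*) [CommRing k] (s a : Polynomial k) :
    GWAS k s a :=
  RingQuot.mkAlgHom k (gwaRelS k s a) (FreeAlgebra.ι k 2)

theorem Module.projective_span_pair_of_isRightRegular {R : Type*} [Ring R] {x p q u : R}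
    (hx : IsRightRegular x) (hxq : x * q ∈ R ∙ x) (hpq : p * q ∈ R ∙ x)
    (hqu : q + u * p = 1) : Module.Projective R (Submodule.span R {x, p}) := by
  set I := Submodule.span R {x, p}
  have hIq : ∀ c : I, (c : R) * q ∈ LinearMap.range (LinearMap.toSpanSingleton R R x) := by
    rw [← LinearMap.span_singleton_eq_range]
    have hle : I.map (LinearMap.toSpanSingleton R R q) ≤ R ∙ x := by
      rw [Submodule.map_span_le]
      rintro _ (rfl | rfl)
      exacts [hxq, hpq]
    exact fun c => hle ⟨c, c.2, rfl⟩
  let divX : I →ₗ[R] R :=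
    (LinearEquiv.ofInjective (LinearMap.toSpanSingleton R R x) hx).symm.toLinearMap ∘ₗ
      LinearMap.codRestrict _ (LinearMap.toSpanSingleton R R q ∘ₗ I.subtype) hIq
  have hdivX (c : I) : divX c * x = c * q :=
    LinearEquiv.ofInjective_symm_apply (LinearMap.toSpanSingleton R R x) (h := hx) ⟨_, hIq c⟩
  have hmem (r : R × R) : r.1 * x + r.2 * p ∈ I :=
    add_mem (I.smul_mem _ (Submodule.subset_span (by simp)))
      (I.smul_mem _ (Submodule.subset_span (by simp)))
  let combine : R × R →ₗ[R] I := LinearMap.codRestrict I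
    ((LinearMap.toSpanSingleton R R x).coprod (LinearMap.toSpanSingleton R R p)) hmem
  refine .of_split (divX.prod (LinearMap.toSpanSingleton R R u ∘ₗ I.subtype)) combine ?_
  refine LinearMap.ext fun c => Subtype.ext ?_
  change divX c * x + c * u * p = c
  rw [hdivX, mul_assoc, ← mul_add, hqu, mul_one]

namespace Polynomial

variable {k : Type*} [Field k]

noncomputable def affineInv (s : k[X]) : k[X] := C (s.coeff 1)⁻¹ * (X - C (s.coeff 0))

theorem comp_affineInv {s : k[X]} (hs : s.degree = 1) : s.comp (affineInv s) = X := by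
  have hc : s.coeff 1 ≠ 0 := coeff_ne_zero_of_eq_degree hs
  nth_rw 1 [eq_X_add_C_of_degree_le_one hs.le]
  simp only [affineInv, add_comp, mul_comp, C_comp, X_comp, ← mul_assoc, ← C_mul,
    mul_inv_cancel₀ hc, C_1, one_mul, sub_add_cancel]

theorem affineInv_comp {s : k[X]} (hs : s.degree = 1) : (affineInv s).comp s = X := by
  have hc : s.coeff 1 ≠ 0 := coeff_ne_zero_of_eq_degree hs
  nth_rw 2 [eq_X_add_C_of_degree_le_one hs.le]
  simp only [affineInv, mul_comp, sub_comp, C_comp, X_comp, add_sub_cancel_right, ← mul_assoc,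
    ← C_mul, inv_mul_cancel₀ hc, C_1, one_mul]

end Polynomial

theorem SemiconjBy.aeval {R A : Type*} [CommSemiring R] [Semiring A] [Algebra R A]
    {u v w : A} (h : SemiconjBy u v w) (f : R[X]) :
    SemiconjBy u (aeval v f) (aeval w f) := by
  induction f using Polynomial.induction_on' with
  | add f g hf hg => simpa only [map_add] using hf.add_right hg
  | monomial n c =>
    simp only [aeval_monomial]
    exact SemiconjBy.mul_right (Algebra.commute_algebraMap_right c u) (h.pow_right n)

namespace GWAS

section Presentation

variable {k : Type*} [CommRing k] (s a : k[X])

local notation "𝐱" => GWAS.x k s a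
local notation "𝐲" => GWAS.y k s a
local notation "𝐡" => GWAS.h k s a

theorem x_mul_h : 𝐱 * 𝐡 = aeval 𝐡 s * 𝐱 := by
  simpa only [GWAS.x, GWAS.y, GWAS.h, map_mul, ← aeval_algHom_apply] using
    RingQuot.mkAlgHom_rel k (gwaRelS.xh (k := k) (s := s) (a := a))

theorem h_mul_y : 𝐡 * 𝐲 = 𝐲 * aeval 𝐡 s := by
  simpa only [GWAS.x, GWAS.y, GWAS.h, map_mul, ← aeval_algHom_apply] using
    RingQuot.mkAlgHom_rel k (gwaRelS.hy (k := k) (s := s) (a := a))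

theorem y_mul_x : 𝐲 * 𝐱 = aeval 𝐡 a := by
  simpa only [GWAS.x, GWAS.y, GWAS.h, map_mul, ← aeval_algHom_apply] using
    RingQuot.mkAlgHom_rel k (gwaRelS.yx (k := k) (s := s) (a := a))

theorem x_mul_y : 𝐱 * 𝐲 = aeval 𝐡 (a.comp s) := by
  simpa only [GWAS.x, GWAS.y, GWAS.h, map_mul, ← aeval_algHom_apply] using
    RingQuot.mkAlgHom_rel k (gwaRelS.xy (k := k) (s := s) (a := a))

theorem x_mul_aeval (f : k[X]) : 𝐱 * aeval 𝐡 f = aeval 𝐡 (f.comp s) * 𝐱 := by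
  rw [aeval_comp]
  exact SemiconjBy.aeval (x_mul_h s a) f

theorem aeval_mul_y (f : k[X]) : aeval 𝐡 f * 𝐲 = 𝐲 * aeval 𝐡 (f.comp s) := by
  rw [aeval_comp]
  exact (SemiconjBy.aeval (h_mul_y s a).symm f).symm

variable {s a} in
theorem induction_on {P : GWAS k s a → Prop} (c : GWAS k s a)
    (algebraMap : ∀ r : k, P (algebraMap k _ r)) (x : P 𝐱) (y : P 𝐲) (h : P 𝐡)
    (add : ∀ c d, P c → P d → P (c + d)) (mul : ∀ c d, P c → P d → P (c * d)) : P c := by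
  obtain ⟨z, rfl⟩ := RingQuot.mkAlgHom_surjective k (gwaRelS k s a) c
  induction z using FreeAlgebra.induction with
  | grade0 r => simpa only [AlgHom.commutes] using algebraMap r
  | grade1 i => fin_cases i; exacts [y, h, x]
  | add z w hz hw => simpa only [map_add] using add _ _ hz hw
  | mul z w hz hw => simpa only [map_mul] using mul _ _ hz hw

noncomputable def stdMonomial (n : ℤ) : GWAS k s a :=
  if 0 ≤ n then 𝐱 ^ n.toNat else 𝐲 ^ (-n).toNat

theorem stdMonomial_zero : stdMonomial s a 0 = 1 := by
  simp [stdMonomial]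

theorem stdMonomial_of_nonneg {n : ℤ} (hn : 0 ≤ n) : stdMonomial s a n = 𝐱 ^ n.toNat :=
  if_pos hn

theorem stdMonomial_of_nonpos {n : ℤ} (hn : n ≤ 0) : stdMonomial s a n = 𝐲 ^ (-n).toNat := by
  obtain rfl | hn := hn.eq_or_lt
  · simp [stdMonomial]
  · exact if_neg hn.not_ge

theorem x_mul_stdMonomial_of_nonneg {n : ℤ} (hn : 0 ≤ n) :
    𝐱 * stdMonomial s a n = stdMonomial s a (n + 1) := by
  rw [stdMonomial_of_nonneg s a hn, stdMonomial_of_nonneg s a (by omega), ← pow_succ',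
    show (n + 1).toNat = n.toNat + 1 by omega]

theorem x_mul_stdMonomial_of_neg {n : ℤ} (hn : n < 0) :
    𝐱 * stdMonomial s a n = aeval 𝐡 (a.comp s) * stdMonomial s a (n + 1) := by
  rw [stdMonomial_of_nonpos s a hn.le, stdMonomial_of_nonpos s a (by omega),
    show (-n).toNat = (-(n + 1)).toNat + 1 by omega, pow_succ', ← mul_assoc, x_mul_y]

theorem y_mul_stdMonomial_of_nonpos {n : ℤ} (hn : n ≤ 0) :
    𝐲 * stdMonomial s a n = stdMonomial s a (n - 1) := by
  rw [stdMonomial_of_nonpos s a hn, stdMonomial_of_nonpos s a (by omega), ← pow_succ',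
    show (-(n - 1)).toNat = (-n).toNat + 1 by omega]

theorem y_mul_stdMonomial_of_pos {n : ℤ} (hn : 0 < n) :
    𝐲 * stdMonomial s a n = aeval 𝐡 a * stdMonomial s a (n - 1) := by
  rw [stdMonomial_of_nonneg s a hn.le, stdMonomial_of_nonneg s a (by omega),
    show n.toNat = (n - 1).toNat + 1 by omega, pow_succ', ← mul_assoc, y_mul_x]

variable {A : Type*} [Semiring A] [Algebra k A] (y' h' x' : A)
  (hxh : x' * h' = aeval h' s * x') (hhy : h' * y' = y' * aeval h' s)
  (hyx : y' * x' = aeval h' a) (hxy : x' * y' = aeval h' (a.comp s))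

noncomputable def lift : GWAS k s a →ₐ[k] A :=
  RingQuot.liftAlgHom k ⟨FreeAlgebra.lift k ![y', h', x'], by
    rintro _ _ ⟨⟩ <;>
      simp only [map_mul, ← aeval_algHom_apply, FreeAlgebra.lift_ι_apply] <;>
      assumption⟩

theorem lift_x : lift s a y' h' x' hxh hhy hyx hxy 𝐱 = x' := by
  simp [lift, GWAS.x]

theorem lift_y : lift s a y' h' x' hxh hhy hyx hxy 𝐲 = y' := by
  simp [lift, GWAS.y]

theorem lift_aeval_h (f : k[X]) : lift s a y' h' x' hxh hhy hyx hxy (aeval 𝐡 f) = aeval h' f := by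
  simp [lift, GWAS.h, ← aeval_algHom_apply]

end Presentation

section NormalForm

variable {k : Type*} [Field k] (s a : k[X])

local notation "𝐱" => GWAS.x k s a
local notation "𝐲" => GWAS.y k s a
local notation "𝐡" => GWAS.h k s a

theorem y_mul_aeval (hs : s.degree = 1) (f : k[X]) :
    𝐲 * aeval 𝐡 f = aeval 𝐡 (f.comp (affineInv s)) * 𝐲 := by
  rw [aeval_mul_y, comp_assoc, affineInv_comp hs, comp_X]

theorem exists_y_pow_mul_aeval (hs : s.degree = 1) {f : k[X]} (hf : f ≠ 0) (j : ℕ) :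
    ∃ c : k[X], c ≠ 0 ∧ 𝐲 ^ j * aeval 𝐡 f = aeval 𝐡 c * 𝐲 ^ j := by
  induction j generalizing f with
  | zero => exact ⟨f, hf, by simp⟩
  | succ j ih =>
    have hf' : f.comp (affineInv s) ≠ 0 := fun h0 => hf <| by
      rw [← comp_X (p := f), ← affineInv_comp hs, ← comp_assoc, h0, zero_comp]
    obtain ⟨c, hc, hjc⟩ := ih hf'
    exact ⟨c, hc, by rw [pow_succ, mul_assoc, y_mul_aeval s a hs, ← mul_assoc, hjc, mul_assoc,
      ← pow_succ]⟩

theorem exists_stdMonomial_mul_x (hs : s.degree = 1) (ha : a ≠ 0) (n : ℤ) :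
    ∃ c : k[X], c ≠ 0 ∧ stdMonomial s a n * 𝐱 = aeval 𝐡 c * stdMonomial s a (n + 1) := by
  rcases le_or_gt 0 n with hn | hn
  · refine ⟨1, one_ne_zero, ?_⟩
    rw [map_one, one_mul, stdMonomial_of_nonneg s a hn, stdMonomial_of_nonneg s a (by omega),
      ← pow_succ, show (n + 1).toNat = n.toNat + 1 by omega]
  · obtain ⟨c, hc, hjc⟩ := exists_y_pow_mul_aeval s a hs ha (-(n + 1)).toNat
    refine ⟨c, hc, ?_⟩
    rw [stdMonomial_of_nonpos s a hn.le, stdMonomial_of_nonpos s a (by omega),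
      show (-n).toNat = (-(n + 1)).toNat + 1 by omega, pow_succ, mul_assoc, y_mul_x, hjc]

open Finsupp

/- Left multiplication by `x` and `y` on `f(h) vₙ`, as dictated by `x vₙ = vₙ₊₁` (`n ≥ 0`),
`x vₙ = σ(a) vₙ₊₁` (`n < 0`), `y vₙ = vₙ₋₁` (`n ≤ 0`) and `y vₙ = a vₙ₋₁` (`n > 0`). -/
noncomputable def shiftX : Module.End k (ℤ →₀ k[X]) :=
  Finsupp.lsum k fun n => lsingle (n + 1) ∘ₗ (aeval s).toLinearMap ∘ₗ
    if 0 ≤ n then LinearMap.id else LinearMap.mulRight k a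

noncomputable def shiftY : Module.End k (ℤ →₀ k[X]) :=
  Finsupp.lsum k fun n => lsingle (n - 1) ∘ₗ
    (if n ≤ 0 then LinearMap.id else LinearMap.mulRight k a) ∘ₗ (aeval (affineInv s)).toLinearMap

theorem shiftX_single (n : ℤ) (f : k[X]) :
    shiftX s a (single n f) = single (n + 1) ((if 0 ≤ n then f else f * a).comp s) := by
  rw [shiftX, lsum_single]; split_ifs <;> rfl

theorem shiftY_single (n : ℤ) (f : k[X]) :
    shiftY s a (single n f) =
      single (n - 1) (if n ≤ 0 then f.comp (affineInv s) else f.comp (affineInv s) * a) := by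
  rw [shiftY, lsum_single]; split_ifs <;> rfl

local notation "𝐦" => Algebra.lsmul k k (ℤ →₀ k[X])

theorem lsmul_single (g : k[X]) (n : ℤ) (f : k[X]) :
    𝐦 g (single n f) = single n (g * f) := by
  simp

theorem aeval_lsmul_X (f : k[X]) :
    aeval (𝐦 (X : k[X])) f = 𝐦 f := by
  rw [aeval_algHom_apply, aeval_X_left_apply]

theorem shiftX_mul_lsmul (f : k[X]) : shiftX s a * 𝐦 f = 𝐦 (f.comp s) * shiftX s a := by
  refine lhom_ext fun n g => ?_
  simp only [Module.End.mul_apply, lsmul_single, shiftX_single]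
  split_ifs <;> simp only [mul_comp, mul_assoc]

theorem lsmul_mul_shiftY (hs : s.degree = 1) (f : k[X]) :
    𝐦 f * shiftY s a = shiftY s a * 𝐦 (f.comp s) := by
  refine lhom_ext fun n g => ?_
  simp only [Module.End.mul_apply, lsmul_single, shiftY_single]
  split_ifs <;> simp only [mul_comp, comp_assoc, comp_affineInv hs, comp_X, mul_assoc]

theorem shiftY_mul_shiftX (hs : s.degree = 1) : shiftY s a * shiftX s a = 𝐦 a := by
  refine lhom_ext fun n g => ?_
  simp only [Module.End.mul_apply, lsmul_single, shiftX_single, shiftY_single, add_sub_cancel_right]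
  split_ifs <;> first | omega | simp only [comp_assoc, comp_affineInv hs, comp_X, mul_comm]

theorem shiftX_mul_shiftY (hs : s.degree = 1) : shiftX s a * shiftY s a = 𝐦 (a.comp s) := by
  refine lhom_ext fun n g => ?_
  simp only [Module.End.mul_apply, lsmul_single, shiftX_single, shiftY_single, sub_add_cancel]
  split_ifs <;>
    first | omega | simp only [mul_comp, comp_assoc, affineInv_comp hs, comp_X, mul_comm]

noncomputable def normalFormRep (hs : s.degree = 1) :
    GWAS k s a →ₐ[k] Module.End k (ℤ →₀ k[X]) :=
  lift s a (shiftY s a) (𝐦 X) (shiftX s a)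
    (by rw [aeval_lsmul_X, shiftX_mul_lsmul, X_comp])
    (by rw [aeval_lsmul_X, lsmul_mul_shiftY s a hs, X_comp])
    (by rw [aeval_lsmul_X, shiftY_mul_shiftX s a hs])
    (by rw [aeval_lsmul_X, shiftX_mul_shiftY s a hs])

theorem normalFormRep_x (hs : s.degree = 1) : normalFormRep s a hs 𝐱 = shiftX s a :=
  lift_x ..

theorem normalFormRep_y (hs : s.degree = 1) : normalFormRep s a hs 𝐲 = shiftY s a :=
  lift_y ..

theorem normalFormRep_aeval_h (hs : s.degree = 1) (f : k[X]) :
    normalFormRep s a hs (aeval 𝐡 f) = 𝐦 f := by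
  rw [normalFormRep, lift_aeval_h, aeval_lsmul_X]

noncomputable def ofNormalForm : (ℤ →₀ k[X]) →ₗ[k] GWAS k s a :=
  Finsupp.lsum k fun n => LinearMap.mulRight k (stdMonomial s a n) ∘ₗ (aeval 𝐡).toLinearMap

theorem ofNormalForm_single (n : ℤ) (f : k[X]) :
    ofNormalForm s a (single n f) = aeval 𝐡 f * stdMonomial s a n := by
  rw [ofNormalForm, lsum_single]; rfl

theorem ofNormalForm_shiftX (m : ℤ →₀ k[X]) :
    ofNormalForm s a (shiftX s a m) = 𝐱 * ofNormalForm s a m := by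
  refine LinearMap.congr_fun (f := ofNormalForm s a ∘ₗ shiftX s a)
    (g := LinearMap.mulLeft k 𝐱 ∘ₗ ofNormalForm s a) (lhom_ext fun n f => ?_) m
  simp only [LinearMap.comp_apply, LinearMap.mulLeft_apply, shiftX_single, ofNormalForm_single,
    ← mul_assoc, x_mul_aeval]
  rcases le_or_gt 0 n with hn | hn
  · rw [if_pos hn, mul_assoc, x_mul_stdMonomial_of_nonneg s a hn]
  · rw [if_neg hn.not_ge, mul_assoc, x_mul_stdMonomial_of_neg s a hn, mul_comp, map_mul,
      mul_assoc]

theorem ofNormalForm_shiftY (hs : s.degree = 1) (m : ℤ →₀ k[X]) :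
    ofNormalForm s a (shiftY s a m) = 𝐲 * ofNormalForm s a m := by
  refine LinearMap.congr_fun (f := ofNormalForm s a ∘ₗ shiftY s a)
    (g := LinearMap.mulLeft k 𝐲 ∘ₗ ofNormalForm s a) (lhom_ext fun n f => ?_) m
  simp only [LinearMap.comp_apply, LinearMap.mulLeft_apply, shiftY_single, ofNormalForm_single,
    ← mul_assoc, y_mul_aeval s a hs]
  rcases le_or_gt n 0 with hn | hn
  · rw [if_pos hn, mul_assoc, y_mul_stdMonomial_of_nonpos s a hn]
  · rw [if_neg hn.not_ge, mul_assoc, y_mul_stdMonomial_of_pos s a hn, map_mul, mul_assoc]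

theorem ofNormalForm_lsmul (f : k[X]) (m : ℤ →₀ k[X]) :
    ofNormalForm s a (𝐦 f m) = aeval 𝐡 f * ofNormalForm s a m := by
  refine LinearMap.congr_fun (f := ofNormalForm s a ∘ₗ 𝐦 f)
    (g := LinearMap.mulLeft k (aeval 𝐡 f) ∘ₗ ofNormalForm s a) (lhom_ext fun n g => ?_) m
  simp only [LinearMap.comp_apply, LinearMap.mulLeft_apply, lsmul_single, ofNormalForm_single,
    map_mul, mul_assoc]

theorem ofNormalForm_normalFormRep (hs : s.degree = 1) (c : GWAS k s a) (m : ℤ →₀ k[X]) :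
    ofNormalForm s a (normalFormRep s a hs c m) = c * ofNormalForm s a m := by
  induction c using induction_on generalizing m with
  | algebraMap r => rw [AlgHom.commutes, Module.algebraMap_end_apply, map_smul, Algebra.smul_def]
  | x => rw [normalFormRep_x, ofNormalForm_shiftX]
  | y => rw [normalFormRep_y, ofNormalForm_shiftY s a hs]
  | h => rw [← aeval_X (R := k) 𝐡, normalFormRep_aeval_h, ofNormalForm_lsmul]
  | add c d hc hd => rw [map_add, LinearMap.add_apply, map_add, hc, hd, add_mul]
  | mul c d hc hd => rw [map_mul, Module.End.mul_apply, hc, hd, mul_assoc]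

noncomputable def normalForm (hs : s.degree = 1) : GWAS k s a →ₗ[k] (ℤ →₀ k[X]) :=
  LinearMap.applyₗ (single 0 1) ∘ₗ (normalFormRep s a hs).toLinearMap

theorem normalFormRep_x_pow_single_zero (hs : s.degree = 1) (j : ℕ) :
    normalFormRep s a hs (𝐱 ^ j) (single 0 1) = single (j : ℤ) 1 := by
  induction j with
  | zero => simp
  | succ j ih =>
    rw [pow_succ', map_mul, Module.End.mul_apply, ih, normalFormRep_x, shiftX_single,
      if_pos j.cast_nonneg, one_comp, Nat.cast_succ]

theorem normalFormRep_y_pow_single_zero (hs : s.degree = 1) (j : ℕ) :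
    normalFormRep s a hs (𝐲 ^ j) (single 0 1) = single (-(j : ℤ)) 1 := by
  induction j with
  | zero => simp
  | succ j ih =>
    rw [pow_succ', map_mul, Module.End.mul_apply, ih, normalFormRep_y, shiftY_single,
      if_pos (by omega), one_comp, Nat.cast_succ, neg_add, sub_eq_add_neg]

theorem normalFormRep_stdMonomial_single_zero (hs : s.degree = 1) (n : ℤ) :
    normalFormRep s a hs (stdMonomial s a n) (single 0 1) = single n 1 := by
  rcases le_or_gt 0 n with hn | hn
  · rw [stdMonomial_of_nonneg s a hn, normalFormRep_x_pow_single_zero, Int.toNat_of_nonneg hn]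
  · rw [stdMonomial_of_nonpos s a hn.le, normalFormRep_y_pow_single_zero,
      Int.toNat_of_nonneg (by omega), neg_neg]

theorem normalForm_ofNormalForm (hs : s.degree = 1) (m : ℤ →₀ k[X]) :
    normalForm s a hs (ofNormalForm s a m) = m := by
  refine LinearMap.congr_fun (f := normalForm s a hs ∘ₗ ofNormalForm s a) (g := LinearMap.id)
    (lhom_ext fun n f => ?_) m
  simp only [normalForm, LinearMap.comp_apply, ofNormalForm_single, AlgHom.toLinearMap_apply,
    map_mul, LinearMap.applyₗ_apply_apply, Module.End.mul_apply,
    normalFormRep_stdMonomial_single_zero, normalFormRep_aeval_h, lsmul_single, mul_one, LinearMap.id_apply]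

theorem ofNormalForm_normalForm (hs : s.degree = 1) (c : GWAS k s a) :
    ofNormalForm s a (normalForm s a hs c) = c := by
  calc ofNormalForm s a (normalForm s a hs c) = c * ofNormalForm s a (single 0 1) :=
        ofNormalForm_normalFormRep s a hs c _
    _ = c := by rw [ofNormalForm_single, map_one, one_mul, stdMonomial_zero, mul_one]

noncomputable def shiftMul (c : ℤ → k[X]) : Module.End k (ℤ →₀ k[X]) :=
  Finsupp.lsum k fun n => lsingle (n + 1) ∘ₗ LinearMap.mulRight k (c n)

theorem shiftMul_single (c : ℤ → k[X]) (n : ℤ) (f : k[X]) :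
    shiftMul c (single n f) = single (n + 1) (f * c n) := by
  rw [shiftMul, lsum_single]; rfl

theorem shiftMul_apply_add_one (c : ℤ → k[X]) (m : ℤ →₀ k[X]) (n : ℤ) :
    shiftMul c m (n + 1) = m n * c n := by
  induction m using Finsupp.induction_linear with
  | zero => simp
  | add m m' hm hm' => simp only [map_add, Finsupp.add_apply, hm, hm', add_mul]
  | single i f =>
    rw [shiftMul_single]
    obtain rfl | hin := eq_or_ne i n
    · simp
    · simp [hin]

theorem shiftMul_injective {c : ℤ → k[X]} (hc : ∀ n, c n ≠ 0) :
    Function.Injective (shiftMul c) := by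
  refine (injective_iff_map_eq_zero _).mpr fun m hm => Finsupp.ext fun n => ?_
  have := shiftMul_apply_add_one c m n
  rw [hm, Finsupp.coe_zero, Pi.zero_apply, eq_comm, mul_eq_zero] at this
  exact this.resolve_right (hc n)

theorem isRightRegular_x (hs : s.degree = 1) (ha : a ≠ 0) : IsRightRegular 𝐱 := by
  choose c hc0 hc using exists_stdMonomial_mul_x s a hs ha
  have hT (m : ℤ →₀ k[X]) : ofNormalForm s a m * 𝐱 = ofNormalForm s a (shiftMul c m) := by
    refine LinearMap.congr_fun (f := LinearMap.mulRight k 𝐱 ∘ₗ ofNormalForm s a)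
      (g := ofNormalForm s a ∘ₗ shiftMul c) (lhom_ext fun n f => ?_) m
    simp only [LinearMap.comp_apply, LinearMap.mulRight_apply, ofNormalForm_single,
      shiftMul_single, mul_assoc, hc, map_mul]
  have hmul : (· * 𝐱) = ofNormalForm s a ∘ shiftMul c ∘ normalForm s a hs := funext fun d => by
    simp only [Function.comp_apply, ← hT, ofNormalForm_normalForm]
  change Function.Injective (· * 𝐱)
  rw [hmul]
  exact Function.LeftInverse.injective (normalForm_ofNormalForm s a hs) |>.comp <|
    (shiftMul_injective hc0).comp (Function.LeftInverse.injective (ofNormalForm_normalForm s a hs))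

end NormalForm

end GWAS

theorem gwa_ideal_projective_general (k : Type*) [Field k]
    (s : k[X]) (hs : s.degree = 1) (a : k[X]) (ha : a ≠ 0)
    (hcop : IsCoprime a (derivative a))
    (p : k[X]) (hpa : p ∣ a) :
    Module.Projective (GWAS k s a)
      ↥(Submodule.span (GWAS k s a)
        ({GWAS.x k s a, aeval (GWAS.h k s a) p} : Set (GWAS k s a))) := by
  obtain ⟨b, rfl⟩ := hpa
  obtain ⟨u, v, huv⟩ := Separable.isCoprime hcop
  refine Module.projective_span_pair_of_isRightRegular (q := aeval (GWAS.h k s _) (v * b))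
    (u := aeval (GWAS.h k s _) u) (GWAS.isRightRegular_x _ _ hs ha) ?_ ?_ ?_
  · rw [GWAS.x_mul_aeval]
    exact Submodule.smul_mem _ _ (Submodule.mem_span_singleton_self _)
  · rw [← map_mul, show p * (v * b) = v * (p * b) by ring, map_mul, ← GWAS.y_mul_x, ← mul_assoc]
    exact Submodule.smul_mem _ _ (Submodule.mem_span_singleton_self _)
  · rw [← map_mul, ← map_add, add_comm, huv, map_one]

/-- In a generalized Weyl algebra `Λ = Λ(k[h], σ, a)` (with `σ` the
automorphism of `k[h]` sending `h` to the degree-one polynomial `s`), if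
`gcd(a, a') = 1` then for every irreducible `p` dividing `a` the left ideal
`I(x,p) = Λx + Λp` is a projective left `Λ`-module. -/
theorem gwa_ideal_projective (k : Type*) [Field k] [CharZero k]
    (s : k[X]) (hs : s.degree = 1) (a : k[X]) (ha : a ≠ 0)
    (hcop : IsCoprime a (derivative a))
    (p : k[X]) (hp : Irreducible p) (hpa : p ∣ a) :
    Module.Projective (GWAS k s a)
      ↥(Submodule.span (GWAS k s a)
        ({GWAS.x k s a, aeval (GWAS.h k s a) p} : Set (GWAS k s a))) :=
  gwa_ideal_projective_general k s hs a ha hcop p hpa
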